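/- The function F is differentiable on ℝ with derivative F'(Q) = ∬_Ω k(x,s) Λ(x,s) e^{-Q Λ(x,s)} d(s,x), and for all Q ∈ (0,1] one has 0 ≤ F'(Q) < R₀ e^{-1}/Q. -/

import Mathlib

open MeasureTheory Real Set Filter

/-- `Λ(x,s) = ∫_s^x θ(t) dt`. -/
noncomputable def Lam (θ : ℝ → ℝ) (x s : ℝ) : ℝ := ∫ t in s..x, θ t

/-- `w(x;Q) = Q e^{-γx} ∫₀^x e^{γs} θ(s) e^{-Q Λ(x,s)} ds`. -/
noncomputable def w (γ : ℝ) (θ : ℝ → ℝ) (Q x : ℝ) : ℝ :=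
  Q * Real.exp (-γ * x) * ∫ s in (0:ℝ)..x, Real.exp (γ * s) * θ s * Real.exp (-Q * Lam θ x s)
/-- The kernel `k(x,s) = (p(x)/N)·θ(s)·e^{-γ(x-s)}`. -/
noncomputable def kker (γ N : ℝ) (p θ : ℝ → ℝ) (x s : ℝ) : ℝ :=
  (p x / N) * θ s * Real.exp (-γ * (x - s))

/-- The triangle `Ω = {(x,s) : 0 ≤ s ≤ x ≤ A}` (first coordinate `x`, second `s`). -/
def Tri (A : ℝ) : Set (ℝ × ℝ) := {q | 0 ≤ q.2 ∧ q.2 ≤ q.1 ∧ q.1 ≤ A}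

/-- Basic reproductive number `R₀ = ∬_Ω k(x,s) d(s,x)`. -/
noncomputable def R0 (γ N A : ℝ) (p θ : ℝ → ℝ) : ℝ :=
  ∫ q in Tri A, kker γ N p θ q.1 q.2

/-- `F(Q) = 1 - ∬_Ω k(x,s) e^{-Q Λ(x,s)} d(s,x)`. -/
noncomputable def FF (γ N A : ℝ) (p θ : ℝ → ℝ) (Q : ℝ) : ℝ :=
  1 - ∫ q in Tri A, kker γ N p θ q.1 q.2 * Real.exp (-Q * Lam θ q.1 q.2)

/-- Iteration map `T(Q) = Q·(1 - F(Q))`. -/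
noncomputable def TT (γ N A : ℝ) (p θ : ℝ → ℝ) (Q : ℝ) : ℝ :=
  Q * (1 - FF γ N A p θ Q)

/-! `F'(Q)` is obtained by differentiating under the integral sign, which is legitimate because
`k` is integrable and `Λ` is bounded on the compact triangle. The bound comes from
`t e^{-t} ≤ e^{-1}` applied to `t = QΛ`; it is strict because the gap `k (e^{-1}/Q - Λ e^{-QΛ})`
is continuous, nonnegative, and positive at the corner `(0,0)` where `Λ = 0`; since the triangle is
convex with nonempty interior, it is then positive on a set of positive measure. -/

theorem hasDerivAt_integral_mul_exp_neg_mul {α : Type*} [MeasurableSpace α] {μ : Measure α}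
    {k l : α → ℝ} {L : ℝ} (hk : Integrable k μ) (hl : AEStronglyMeasurable l μ)
    (hlL : ∀ᵐ x ∂μ, |l x| ≤ L) (Q₀ : ℝ) :
    HasDerivAt (fun Q => ∫ x, k x * exp (-Q * l x) ∂μ)
      (-∫ x, k x * l x * exp (-Q₀ * l x) ∂μ) Q₀ := by
  set C := exp ((|Q₀| + 1) * L)
  have hexp_meas : ∀ Q : ℝ, AEStronglyMeasurable (fun x => exp (-Q * l x)) μ := fun Q =>
    continuous_exp.comp_aestronglyMeasurable (hl.const_mul (-Q))
  have hexp_le : ∀ᵐ x ∂μ, ∀ Q ∈ Metric.ball Q₀ 1, ‖exp (-Q * l x)‖ ≤ C := by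
    filter_upwards [hlL] with x hx Q hQ
    have hQ : |Q| ≤ |Q₀| + 1 := by
      have := abs_sub_abs_le_abs_sub Q Q₀
      rw [Metric.mem_ball, Real.dist_eq] at hQ
      linarith
    rw [Real.norm_of_nonneg (exp_pos _).le, exp_le_exp, neg_mul]
    exact (neg_le_abs _).trans (by rw [abs_mul]; gcongr)
  have hbound : ∀ᵐ x ∂μ, ∀ Q ∈ Metric.ball Q₀ 1,
      ‖-(k x * l x * exp (-Q * l x))‖ ≤ ‖k x‖ * (L * C) := by
    filter_upwards [hlL, hexp_le] with x hx hxC Q hQ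
    rw [norm_neg, norm_mul, norm_mul, mul_assoc]
    exact mul_le_mul_of_nonneg_left
      (mul_le_mul hx (hxC Q hQ) (norm_nonneg _) ((abs_nonneg _).trans hx)) (norm_nonneg _)
  have hderiv : ∀ᵐ x ∂μ, ∀ Q ∈ Metric.ball Q₀ 1,
      HasDerivAt (fun Q => k x * exp (-Q * l x)) (-(k x * l x * exp (-Q * l x))) Q :=
    .of_forall fun x Q _ =>
      ((((hasDerivAt_neg Q).mul_const (l x)).exp).const_mul (k x)).congr_deriv (by ring)
  have hk_exp_int : Integrable (fun x => k x * exp (-Q₀ * l x)) μ :=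
    hk.mul_bdd (hexp_meas Q₀)
      (hexp_le.mono fun x hx => hx Q₀ (Metric.mem_ball_self one_pos))
  have := (hasDerivAt_integral_of_dominated_loc_of_deriv_le
    (F := fun Q x => k x * exp (-Q * l x)) (Metric.ball_mem_nhds Q₀ one_pos)
    (.of_forall fun Q => hk.aestronglyMeasurable.mul (hexp_meas Q)) hk_exp_int
    ((hk.aestronglyMeasurable.mul hl).mul (hexp_meas Q₀)).neg hbound
    (hk.norm.mul_const _) hderiv).2
  simpa only [integral_neg] using this

theorem setIntegral_pos_of_continuousOn {X : Type*} [TopologicalSpace X] [MeasurableSpace X]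
    [OpensMeasurableSpace X] {μ : Measure X} [μ.IsOpenPosMeasure] {s : Set X} {f : X → ℝ}
    {x₀ : X} (hs : MeasurableSet s) (hsi : s ⊆ closure (interior s)) (hf : ContinuousOn f s)
    (hfi : IntegrableOn f s μ) (hf0 : ∀ x ∈ s, 0 ≤ f x) (hx₀ : x₀ ∈ s) (hfx₀ : 0 < f x₀) :
    0 < ∫ x in s, f x ∂μ := by
  rw [setIntegral_pos_iff_support_of_nonneg_ae (ae_restrict_of_forall_mem hs hf0) hfi]
  obtain ⟨U, hU, hUs⟩ := continuousOn_iff'.1 hf (Ioi 0) isOpen_Ioi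
  have hx₀U : x₀ ∈ U := (hUs.le ⟨hfx₀, hx₀⟩).1
  obtain ⟨y, hyU, hys⟩ := mem_closure_iff.1 (hsi hx₀) U hU hx₀U
  refine (hU.inter isOpen_interior).measure_pos μ ⟨y, hyU, hys⟩ |>.trans_le (measure_mono ?_)
  rintro z ⟨hzU, hzs⟩
  have hz : z ∈ f ⁻¹' Ioi 0 ∩ s := hUs.ge ⟨hzU, interior_subset hzs⟩
  exact ⟨hz.1.ne', hz.2⟩

theorem mul_exp_neg_mul_le_div {Q : ℝ} (hQ : 0 < Q) (l : ℝ) : l * exp (-Q * l) ≤ exp (-1) / Q := by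
  rw [le_div_iff₀ hQ, mul_comm, ← mul_assoc, neg_mul]
  exact mul_exp_neg_le_exp_neg_one (Q * l)

theorem setIntegral_mul_mul_exp_neg_mul_lt {X : Type*} [TopologicalSpace X] [T2Space X]
    [MeasurableSpace X] [OpensMeasurableSpace X] {μ : Measure X} [μ.IsOpenPosMeasure]
    [IsFiniteMeasureOnCompacts μ] {s : Set X} {k l : X → ℝ} {x₀ : X} {Q : ℝ}
    (hs : IsCompact s) (hsi : s ⊆ closure (interior s)) (hk : ContinuousOn k s)
    (hl : ContinuousOn l s) (hk0 : ∀ x ∈ s, 0 ≤ k x) (hx₀ : x₀ ∈ s) (hkx₀ : 0 < k x₀)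
    (hlx₀ : l x₀ = 0) (hQ : 0 < Q) :
    ∫ x in s, k x * l x * exp (-Q * l x) ∂μ < (∫ x in s, k x ∂μ) * exp (-1) / Q := by
  have hgap_cont : ContinuousOn (fun x => k x * (exp (-1) / Q) - k x * l x * exp (-Q * l x)) s :=
    (hk.mul continuousOn_const).sub ((hk.mul hl).mul (continuousOn_const.mul hl).rexp)
  have hgap_pos := setIntegral_pos_of_continuousOn (μ := μ) hs.measurableSet hsi hgap_cont
    (hgap_cont.integrableOn_compact hs)
    (fun x hx => by
      rw [sub_nonneg, mul_assoc]
      exact mul_le_mul_of_nonneg_left (mul_exp_neg_mul_le_div hQ _) (hk0 x hx))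
    hx₀ (by simp only [hlx₀, mul_zero, zero_mul, sub_zero]; positivity)
  have hk_int : IntegrableOn (fun x => k x * (exp (-1) / Q)) s μ :=
    (hk.mul continuousOn_const).integrableOn_compact hs
  have hf_int : IntegrableOn (fun x => k x * l x * exp (-Q * l x)) s μ :=
    ((hk.mul hl).mul (continuousOn_const.mul hl).rexp).integrableOn_compact hs
  rw [integral_sub hk_int hf_int, integral_mul_const, sub_pos] at hgap_pos
  rwa [mul_div_assoc]

theorem isClosed_Tri (A : ℝ) : IsClosed (Tri A) :=
  (isClosed_le continuous_const continuous_snd).inter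
    ((isClosed_le continuous_snd continuous_fst).inter (isClosed_le continuous_fst continuous_const))

theorem Tri_subset_Icc_prod (A : ℝ) : Tri A ⊆ Icc 0 A ×ˢ Icc 0 A :=
  fun _ ⟨h0s, hsx, hxA⟩ => ⟨⟨h0s.trans hsx, hxA⟩, ⟨h0s, hsx.trans hxA⟩⟩

theorem isCompact_Tri (A : ℝ) : IsCompact (Tri A) :=
  (isCompact_Icc.prod isCompact_Icc).of_isClosed_subset (isClosed_Tri A) (Tri_subset_Icc_prod A)

theorem convex_Tri (A : ℝ) : Convex ℝ (Tri A) := by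
  rintro ⟨x, s⟩ ⟨h0s, hsx, hxA⟩ ⟨x', s'⟩ ⟨h0s', hsx', hxA'⟩ a b ha hb hab
  simp only [Tri, Prod.smul_mk, Prod.mk_add_mk, smul_eq_mul]
  refine ⟨by positivity, add_le_add (by gcongr) (by gcongr), ?_⟩
  calc a * x + b * x' ≤ a * A + b * A := by gcongr
    _ = A := by rw [← add_mul, hab, one_mul]

theorem Tri_subset_closure_interior {A : ℝ} (hA : 0 < A) : Tri A ⊆ closure (interior (Tri A)) := by
  have hopen : IsOpen {q : ℝ × ℝ | 0 < q.2 ∧ q.2 < q.1 ∧ q.1 < A} :=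
    (isOpen_lt continuous_const continuous_snd).inter
      ((isOpen_lt continuous_snd continuous_fst).inter (isOpen_lt continuous_fst continuous_const))
  have hsub : {q : ℝ × ℝ | 0 < q.2 ∧ q.2 < q.1 ∧ q.1 < A} ⊆ Tri A :=
    fun _ ⟨h0s, hsx, hxA⟩ => ⟨h0s.le, hsx.le, hxA.le⟩
  have hint : (interior (Tri A)).Nonempty :=
    ⟨(2 * A / 3, A / 3), interior_maximal hsub hopen
      (show 0 < A / 3 ∧ A / 3 < 2 * A / 3 ∧ 2 * A / 3 < A by refine ⟨?_, ?_, ?_⟩ <;> linarith)⟩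
  rw [(convex_Tri A).closure_interior_eq_closure_of_nonempty_interior hint,
    (isClosed_Tri A).closure_eq]

theorem continuousOn_Lam {θ : ℝ → ℝ} {a b : ℝ} (hθ : IntegrableOn θ (uIcc a b)) :
    ContinuousOn (fun q : ℝ × ℝ => Lam θ q.1 q.2) (uIcc a b ×ˢ uIcc a b) := by
  have hθ_int : ∀ c ∈ uIcc a b, IntervalIntegrable θ volume a c := fun c hc =>
    (hθ.mono_set (uIcc_subset_uIcc left_mem_uIcc hc)).intervalIntegrable
  have hG := intervalIntegral.continuousOn_primitive_interval hθ
  refine ((hG.comp continuousOn_fst fun _ hq => hq.1).sub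
    (hG.comp continuousOn_snd fun _ hq => hq.2)).congr fun q hq => ?_
  exact (intervalIntegral.integral_interval_sub_left (hθ_int _ hq.1) (hθ_int _ hq.2)).symm

theorem Lam_self (θ : ℝ → ℝ) (x : ℝ) : Lam θ x x = 0 :=
  intervalIntegral.integral_same

theorem Lam_nonneg {θ : ℝ → ℝ} {x s : ℝ} (hsx : s ≤ x) (hθ : ∀ t ∈ Icc s x, 0 ≤ θ t) :
    0 ≤ Lam θ x s :=
  intervalIntegral.integral_nonneg hsx hθ

theorem continuousOn_kker {γ N : ℝ} {p θ : ℝ → ℝ} {s : Set ℝ} (hp : ContinuousOn p s)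
    (hθ : ContinuousOn θ s) :
    ContinuousOn (fun q : ℝ × ℝ => kker γ N p θ q.1 q.2) (s ×ˢ s) :=
  (((hp.comp continuousOn_fst fun _ hq => hq.1).div_const N).mul
    (hθ.comp continuousOn_snd fun _ hq => hq.2)).mul (by fun_prop)

theorem kker_pos {γ N : ℝ} {p θ : ℝ → ℝ} {x s : ℝ} (hN : 0 < N) (hp : 0 < p x) (hθ : 0 < θ s) :
    0 < kker γ N p θ x s := by
  unfold kker
  positivity

theorem F_deriv_general (γ A N : ℝ) (hA : 0 < A) (hN : 0 < N)
    (θ p : ℝ → ℝ)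
    (hθc : ContinuousOn θ (Set.Icc 0 A)) (hθpos : ∀ x ∈ Set.Icc 0 A, 0 < θ x)
    (hpc : ContinuousOn p (Set.Icc 0 A)) (hppos : ∀ x ∈ Set.Icc 0 A, 0 < p x) :
    (∀ Q : ℝ, HasDerivAt (FF γ N A p θ)
      (∫ q in Tri A, kker γ N p θ q.1 q.2 * Lam θ q.1 q.2 *
        Real.exp (-Q * Lam θ q.1 q.2)) Q) ∧
    ∀ Q ∈ Set.Ioc (0:ℝ) 1,
      0 ≤ (∫ q in Tri A, kker γ N p θ q.1 q.2 * Lam θ q.1 q.2 *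
        Real.exp (-Q * Lam θ q.1 q.2)) ∧
      (∫ q in Tri A, kker γ N p θ q.1 q.2 * Lam θ q.1 q.2 *
        Real.exp (-Q * Lam θ q.1 q.2)) < R0 γ N A p θ * Real.exp (-1) / Q := by
  have hk : ContinuousOn (fun q : ℝ × ℝ => kker γ N p θ q.1 q.2) (Tri A) :=
    (continuousOn_kker hpc hθc).mono (Tri_subset_Icc_prod A)
  have hl : ContinuousOn (fun q : ℝ × ℝ => Lam θ q.1 q.2) (Tri A) :=
    have hIcc : uIcc 0 A = Icc 0 A := uIcc_of_le hA.le
    (continuousOn_Lam (hIcc ▸ hθc.integrableOn_compact isCompact_Icc)).mono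
      (hIcc ▸ Tri_subset_Icc_prod A)
  have hk_pos : ∀ q ∈ Tri A, 0 < kker γ N p θ q.1 q.2 := fun q hq =>
    kker_pos hN (hppos _ (Tri_subset_Icc_prod A hq).1) (hθpos _ (Tri_subset_Icc_prod A hq).2)
  have hl_nonneg : ∀ q ∈ Tri A, 0 ≤ Lam θ q.1 q.2 := fun q hq =>
    Lam_nonneg hq.2.1 fun t ht => (hθpos t ⟨hq.1.trans ht.1, ht.2.trans hq.2.2⟩).le
  have h00 : ((0 : ℝ), (0 : ℝ)) ∈ Tri A := ⟨le_rfl, le_rfl, hA.le⟩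
  obtain ⟨L, hL⟩ := (isCompact_Tri A).exists_bound_of_continuousOn hl
  refine ⟨fun Q => ?_, fun Q hQ => ⟨?_, ?_⟩⟩
  · have := (hasDerivAt_const Q (1 : ℝ)).sub (hasDerivAt_integral_mul_exp_neg_mul
      (hk.integrableOn_compact (μ := volume) (isCompact_Tri A))
      (hl.aestronglyMeasurable (isClosed_Tri A).measurableSet)
      (ae_restrict_of_forall_mem (isClosed_Tri A).measurableSet hL) Q)
    rwa [zero_sub, neg_neg] at this
  · refine setIntegral_nonneg (isClosed_Tri A).measurableSet fun q hq => ?_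
    have := hk_pos q hq
    have := hl_nonneg q hq
    positivity
  · exact setIntegral_mul_mul_exp_neg_mul_lt (isCompact_Tri A) (Tri_subset_closure_interior hA)
      hk hl (fun q hq => (hk_pos q hq).le) h00 (hk_pos _ h00) (Lam_self θ 0) hQ.1

/-- `F` is differentiable with
`F'(Q) = ∬_Ω k Λ e^{-QΛ}`, and `0 ≤ F'(Q) < R₀ e^{-1}/Q` for `Q ∈ (0,1]`. -/
theorem F_deriv (γ A N : ℝ) (hγ : 0 < γ) (hA : 0 < A) (hN : 0 < N)
    (θ p : ℝ → ℝ)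
    (hθc : ContinuousOn θ (Set.Icc 0 A)) (hθpos : ∀ x ∈ Set.Icc 0 A, 0 < θ x)
    (hpc : ContinuousOn p (Set.Icc 0 A)) (hppos : ∀ x ∈ Set.Icc 0 A, 0 < p x)
    (hnorm : (1/N) * ∫ x in (0:ℝ)..A, p x = 1) :
    (∀ Q : ℝ, HasDerivAt (FF γ N A p θ)
      (∫ q in Tri A, kker γ N p θ q.1 q.2 * Lam θ q.1 q.2 *
        Real.exp (-Q * Lam θ q.1 q.2)) Q) ∧
    ∀ Q ∈ Set.Ioc (0:ℝ) 1,
      0 ≤ (∫ q in Tri A, kker γ N p θ q.1 q.2 * Lam θ q.1 q.2 *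
        Real.exp (-Q * Lam θ q.1 q.2)) ∧
      (∫ q in Tri A, kker γ N p θ q.1 q.2 * Lam θ q.1 q.2 *
        Real.exp (-Q * Lam θ q.1 q.2)) < R0 γ N A p θ * Real.exp (-1) / Q :=
  F_deriv_general γ A N hA hN θ p hθc hθpos hpc hppos
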